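/- Let 1/4 < α < 1/3 and R_+, R_- > √3. There exist constants c > 0 and t_0 > 0 such that for all t ≥ t_0: Re G(ξ) < -c·t^{1-3α} for every ξ ∈ Γ_+ with |ξ - i| ≥ t^{-α}, and Re H(ζ) > c·t^{1-3α} for every ζ ∈ Γ_- with |ζ + i| ≥ t^{-α}. (Quantitative part of Lemma 6.1.) -/

import Mathlib

open scoped Real BigOperators

/-- `Re G(ξ)` for the spectral function `G(ξ) = -2t log ξ - it(ξ + ξ⁻¹)` (i.e. `x = -2t`). -/
noncomputable def ReG (t : ℝ) (ξ : ℂ) : ℝ :=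
  -2 * t * Real.log (‖ξ‖) + t * (ξ + ξ⁻¹).im

/-- `Re H(ζ)` for the spectral function `H(ζ) = 2t log ζ - it(ζ + ζ⁻¹)` (i.e. `x = -2t`). -/
noncomputable def ReH (t : ℝ) (ζ : ℂ) : ℝ :=
  2 * t * Real.log (‖ζ‖) + t * (ζ + ζ⁻¹).im

/-- The steep descent contour `Γ₊` built with radius `R`. -/
def GammaPlus (R : ℝ) : Set ℂ :=
  ({z | ∃ x : ℝ, 0 ≤ x ∧ z = Complex.I + (x : ℂ) * Complex.exp (Complex.I * ((Real.pi : ℂ) / 6))}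
      ∩ Metric.closedBall Complex.I 1) ∪
  ({z | ∃ x : ℝ, 0 ≤ x ∧ z = Complex.I + (x : ℂ) * Complex.exp (Complex.I * (5 * (Real.pi : ℂ) / 6))}
      ∩ Metric.closedBall Complex.I 1) ∪
  (({z | ∃ x : ℝ, 0 ≤ x ∧ z = Complex.I + Complex.exp (Complex.I * ((Real.pi : ℂ) / 6)) + (x : ℂ)}
      \ Metric.ball Complex.I 1) ∩ Metric.closedBall 0 R) ∪
  (({z | ∃ x : ℝ, 0 ≤ x ∧ z = Complex.I + Complex.exp (Complex.I * (5 * (Real.pi : ℂ) / 6)) - (x : ℂ)}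
      \ Metric.ball Complex.I 1) ∩ Metric.closedBall 0 R) ∪
  {z | ‖z‖ = R ∧ z.im ≤ 3 / 2}

/-- The steep descent contour `Γ₋` built with radius `R`: the mirror image of `Γ₊`
across the real axis. -/
def GammaMinus (R : ℝ) : Set ℂ :=
  (fun z => (starRingEnd ℂ) z) '' GammaPlus R

/-!
Write `Re G(ξ) = t φ(ξ)` with `φ(ξ) = -log |ξ|² + Im ξ · (1 - |ξ|⁻²)`. On the two rays
`i + x e^{iπ/6}`, `i + x e^{5iπ/6}` (`0 ≤ x ≤ 1`) one has `|ξ|² = 1 + x + x²` and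
`Im ξ = 1 + x/2`, and there `φ ≤ -x³/44`; as `x = |ξ - i| ≥ t^{-α}`, this gives
`Re G ≤ -t^{1-3α}/44`. On the rest of `Γ₊` one has `|ξ|² ≥ 3` and `Im ξ ≤ 3/2`, so `φ ≤ -1/11`
and `Re G ≤ -t/11 ≤ -t^{1-3α}/11`. Both bounds on `φ` become polynomial inequalities once
`log` is bounded below by its Padé approximant `3(y² - 1)/(y² + 4y + 1)` on `y ≥ 1`.
The statement for `H` on `Γ₋` follows by conjugation, since `Re H(ζ̄) = -Re G(ζ)`.
-/

open Complex ComplexConjugate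

lemma Real.three_mul_sq_sub_one_div_le_log {y : ℝ} (hy : 1 ≤ y) :
    3 * (y ^ 2 - 1) / (y ^ 2 + 4 * y + 1) ≤ Real.log y := by
  let f : ℝ → ℝ := fun z => Real.log z - 3 * (z ^ 2 - 1) / (z ^ 2 + 4 * z + 1)
  have hf : ∀ z : ℝ, 0 < z → HasDerivAt f ((z - 1) ^ 4 / (z * (z ^ 2 + 4 * z + 1) ^ 2)) z := by
    intro z hz
    have hden : z ^ 2 + 4 * z + 1 ≠ 0 := by positivity
    have hq : HasDerivAt (fun z : ℝ => 3 * (z ^ 2 - 1) / (z ^ 2 + 4 * z + 1))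
        ((3 * (2 * z) * (z ^ 2 + 4 * z + 1) - 3 * (z ^ 2 - 1) * (2 * z + 4))
          / (z ^ 2 + 4 * z + 1) ^ 2) z := by
      refine HasDerivAt.div ?_ ?_ hden
      · simpa using (((hasDerivAt_pow 2 z).sub_const 1).const_mul 3)
      · simpa using (((hasDerivAt_pow 2 z).add ((hasDerivAt_id z).const_mul 4)).add_const 1)
    refine ((Real.hasDerivAt_log hz.ne').sub hq).congr_deriv ?_
    field_simp
    ring
  have hmono : MonotoneOn f (Set.Ici 1) := by
    refine monotoneOn_of_hasDerivWithinAt_nonneg (convex_Ici 1)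
      (fun z hz => (hf z (by linarith [Set.mem_Ici.mp hz])).continuousAt.continuousWithinAt)
      (fun z hz => (hf z ?_).hasDerivWithinAt) (fun z hz => ?_)
    all_goals rw [interior_Ici, Set.mem_Ioi] at hz
    · linarith
    · have : 0 < z := by linarith
      positivity
  have := hmono Set.self_mem_Ici hy hy
  simp only [f, Real.log_one] at this
  linarith

lemma neg_log_add_sub_div_le_neg_cube {x : ℝ} (h0 : 0 ≤ x) (h1 : x ≤ 1) :
    -Real.log (1 + x + x ^ 2) + (1 + x / 2) - (1 + x / 2) / (1 + x + x ^ 2) ≤ -x ^ 3 / 44 := by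
  set y := 1 + x + x ^ 2
  have hy1 : 1 ≤ y := by nlinarith
  have hlog := Real.three_mul_sq_sub_one_div_le_log hy1
  have hpoly : 0 ≤ 82 + 98 * x + 47 * x ^ 2 + 7 * x ^ 3 - 32 * x ^ 4 - 3 * x ^ 5 - x ^ 6 := by
    nlinarith [pow_le_one₀ h0 h1 (n := 4), pow_le_one₀ h0 h1 (n := 5), pow_le_one₀ h0 h1 (n := 6),
      pow_nonneg h0 2, pow_nonneg h0 3]
  have hpade : -(3 * (y ^ 2 - 1) / (y ^ 2 + 4 * y + 1)) + (1 + x / 2) - (1 + x / 2) / y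
      ≤ -x ^ 3 / 44 := by
    have hy0 : 0 < y := by linarith
    rw [← sub_nonneg]
    have hid : -x ^ 3 / 44 - (-(3 * (y ^ 2 - 1) / (y ^ 2 + 4 * y + 1)) + (1 + x / 2) - (1 + x / 2) / y)
        = x ^ 3 * (82 + 98 * x + 47 * x ^ 2 + 7 * x ^ 3 - 32 * x ^ 4 - 3 * x ^ 5 - x ^ 6)
          / (44 * y * (y ^ 2 + 4 * y + 1)) := by
      field_simp
      ring
    rw [hid]
    positivity
  linarith

lemma neg_log_add_sub_div_le_of_three_le {s b : ℝ} (hs : 3 ≤ s) (hb : b ≤ 3 / 2) :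
    -Real.log s + b - b / s ≤ -1 / 11 := by
  have hs0 : 0 < s := by linarith
  have hlog := Real.three_mul_sq_sub_one_div_le_log (show 1 ≤ s by linarith)
  have hb' : b - b / s ≤ 3 / 2 - 3 / 2 / s := by
    have : b * (1 - 1 / s) ≤ 3 / 2 * (1 - 1 / s) :=
      mul_le_mul_of_nonneg_right hb (by rw [sub_nonneg, div_le_one hs0]; linarith)
    field_simp at this ⊢
    linarith
  have hpade : -(3 * (s ^ 2 - 1) / (s ^ 2 + 4 * s + 1)) + 3 / 2 - 3 / 2 / s ≤ -1 / 11 := by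
    rw [← sub_nonneg]
    have hid : -1 / 11 - (-(3 * (s ^ 2 - 1) / (s ^ 2 + 4 * s + 1)) + 3 / 2 - 3 / 2 / s)
        = (s - 3) * (31 * s ^ 2 - 14 * s - 11) / (22 * s * (s ^ 2 + 4 * s + 1)) := by
      field_simp
      ring
    rw [hid]
    have : 0 ≤ s - 3 := by linarith
    have : 0 ≤ 31 * s ^ 2 - 14 * s - 11 := by nlinarith
    positivity
  linarith

lemma ReG_eq_mul (t : ℝ) (ξ : ℂ) :
    ReG t ξ = t * (-Real.log (normSq ξ) + ξ.im - ξ.im / normSq ξ) := by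
  rw [ReG, add_im, inv_im, norm_def, Real.log_sqrt (normSq_nonneg ξ)]
  ring

lemma ReH_conj (t : ℝ) (ξ : ℂ) : ReH t (conj ξ) = -ReG t ξ := by
  rw [ReH, ReG, ← map_inv₀, ← map_add, conj_im, norm_conj]
  ring

lemma rpow_one_sub_three_mul_le {α t x : ℝ} (ht : 0 < t) (hx : t ^ (-α) ≤ x) :
    t ^ (1 - 3 * α) ≤ t * x ^ 3 := by
  have hcube : t ^ (1 - 3 * α) = t * (t ^ (-α)) ^ 3 := by
    rw [← Real.rpow_natCast, ← Real.rpow_mul ht.le, mul_comm t, ← Real.rpow_add_one ht.ne']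
    push_cast
    ring_nf
  rw [hcube]
  gcongr

lemma ReG_lt_of_near_ray {α t x : ℝ} (ht : 1 ≤ t) (hx : t ^ (-α) ≤ x) (h1 : x ≤ 1) {ξ : ℂ}
    (hn : normSq ξ = 1 + x + x ^ 2) (him : ξ.im = 1 + x / 2) :
    ReG t ξ < -(1 / 50) * t ^ (1 - 3 * α) := by
  have ht0 : 0 < t := by linarith
  have hx0 : 0 ≤ x := (Real.rpow_pos_of_pos ht0 _).le.trans hx
  have hrate := neg_log_add_sub_div_le_neg_cube hx0 h1
  rw [← hn, ← him] at hrate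
  have hpos : 0 < t ^ (1 - 3 * α) := Real.rpow_pos_of_pos ht0 _
  calc ReG t ξ ≤ t * (-x ^ 3 / 44) := by rw [ReG_eq_mul]; gcongr
    _ ≤ -(1 / 44) * t ^ (1 - 3 * α) := by nlinarith [rpow_one_sub_three_mul_le ht0 hx]
    _ < -(1 / 50) * t ^ (1 - 3 * α) := by linarith

lemma ReG_lt_of_three_le_normSq {α t : ℝ} (hα : 0 ≤ α) (ht : 1 ≤ t) {ξ : ℂ}
    (hn : 3 ≤ normSq ξ) (him : ξ.im ≤ 3 / 2) :
    ReG t ξ < -(1 / 50) * t ^ (1 - 3 * α) := by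
  have hpos : 0 < t ^ (1 - 3 * α) := Real.rpow_pos_of_pos (by linarith) _
  have hle : t ^ (1 - 3 * α) ≤ t := by
    simpa using Real.rpow_le_rpow_of_exponent_le ht (show 1 - 3 * α ≤ 1 by linarith)
  calc ReG t ξ ≤ t * (-1 / 11) := by
        rw [ReG_eq_mul]; gcongr; exact neg_log_add_sub_div_le_of_three_le hn him
    _ ≤ -(1 / 11) * t ^ (1 - 3 * α) := by linarith
    _ < -(1 / 50) * t ^ (1 - 3 * α) := by linarith

lemma exp_I_mul_pi_div_six :
    (exp (I * (π / 6))).re = √3 / 2 ∧ (exp (I * (π / 6))).im = 1 / 2 := by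
  rw [show I * (π / 6 : ℂ) = ((π / 6 : ℝ) : ℂ) * I by push_cast; ring,
    exp_ofReal_mul_I_re, exp_ofReal_mul_I_im, Real.cos_pi_div_six, Real.sin_pi_div_six]
  exact ⟨rfl, rfl⟩

lemma exp_I_mul_five_pi_div_six :
    (exp (I * (5 * π / 6))).re = -(√3 / 2) ∧ (exp (I * (5 * π / 6))).im = 1 / 2 := by
  rw [show I * (5 * π / 6 : ℂ) = ((π - π / 6 : ℝ) : ℂ) * I by push_cast; ring,
    exp_ofReal_mul_I_re, exp_ofReal_mul_I_im, Real.cos_pi_sub, Real.sin_pi_sub,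
    Real.cos_pi_div_six, Real.sin_pi_div_six]
  exact ⟨rfl, rfl⟩

lemma norm_I_add_mul_sub_I {w : ℂ} (hre : w.re ^ 2 = 3 / 4) (him : w.im = 1 / 2) {x : ℝ}
    (hx : 0 ≤ x) : ‖I + x * w - I‖ = x := by
  have hw : ‖w‖ = 1 := by
    rw [norm_def, normSq_apply, ← sq, ← sq, hre, him]
    norm_num
  rw [add_sub_cancel_left, norm_mul, norm_real, Real.norm_of_nonneg hx, hw, mul_one]

lemma normSq_I_add_mul {w : ℂ} (hre : w.re ^ 2 = 3 / 4) (him : w.im = 1 / 2) (x : ℝ) :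
    normSq (I + x * w) = 1 + x + x ^ 2 := by
  simp only [normSq_apply, add_re, add_im, mul_re, mul_im, I_re, I_im, ofReal_re, ofReal_im, him]
  linear_combination x ^ 2 * hre

lemma im_I_add_mul {w : ℂ} (him : w.im = 1 / 2) (x : ℝ) : (I + x * w).im = 1 + x / 2 := by
  simp only [add_im, mul_im, I_im, ofReal_re, ofReal_im, him]
  ring

lemma three_le_normSq_I_add_add {w : ℂ} (hre : w.re ^ 2 = 3 / 4) (him : w.im = 1 / 2) {s : ℝ}
    (hs : 0 ≤ s * w.re) : 3 ≤ normSq (I + w + s) := by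
  simp only [normSq_apply, add_re, add_im, I_re, I_im, ofReal_re, ofReal_im, him]
  nlinarith

lemma im_I_add_add {w : ℂ} (him : w.im = 1 / 2) (s : ℝ) : (I + w + s).im = 3 / 2 := by
  simp only [add_im, I_im, ofReal_im, him]
  norm_num

lemma ReG_lt_of_mem_ray {α t : ℝ} (ht : 1 ≤ t) {w : ℂ} (hre : w.re ^ 2 = 3 / 4)
    (him : w.im = 1 / 2) {ξ : ℂ}
    (hξ : ξ ∈ {z | ∃ x : ℝ, 0 ≤ x ∧ z = I + x * w} ∩ Metric.closedBall I 1)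
    (hd : t ^ (-α) ≤ ‖ξ - I‖) : ReG t ξ < -(1 / 50) * t ^ (1 - 3 * α) := by
  obtain ⟨⟨x, hx, rfl⟩, hball⟩ := hξ
  have hdist := norm_I_add_mul_sub_I hre him hx
  rw [Metric.mem_closedBall, dist_eq, hdist] at hball
  exact ReG_lt_of_near_ray ht (hdist ▸ hd) hball (normSq_I_add_mul hre him x) (im_I_add_mul him x)

lemma ReG_lt_of_mem_GammaPlus {R α t : ℝ} (hR : √3 ≤ R) (hα : 0 ≤ α) (ht : 1 ≤ t) {ξ : ℂ}
    (hξ : ξ ∈ GammaPlus R) (hd : t ^ (-α) ≤ ‖ξ - I‖) :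
    ReG t ξ < -(1 / 50) * t ^ (1 - 3 * α) := by
  have h3 : √3 ^ 2 = 3 := Real.sq_sqrt (by norm_num)
  obtain ⟨hre₁, him₁⟩ := exp_I_mul_pi_div_six
  obtain ⟨hre₂, him₂⟩ := exp_I_mul_five_pi_div_six
  have hsq₁ : (exp (I * (π / 6))).re ^ 2 = 3 / 4 := by rw [hre₁]; linear_combination h3 / 4
  have hsq₂ : (exp (I * (5 * π / 6))).re ^ 2 = 3 / 4 := by rw [hre₂]; linear_combination h3 / 4
  rcases hξ with ((((hray | hray) | ⟨⟨⟨x, hx, rfl⟩, -⟩, -⟩) | ⟨⟨⟨x, hx, rfl⟩, -⟩, -⟩) | ⟨hnorm, him⟩)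
  · exact ReG_lt_of_mem_ray ht hsq₁ him₁ hray hd
  · exact ReG_lt_of_mem_ray ht hsq₂ him₂ hray hd
  · refine ReG_lt_of_three_le_normSq hα ht (three_le_normSq_I_add_add hsq₁ him₁ ?_)
      (im_I_add_add him₁ x).le
    rw [hre₁]
    positivity
  · rw [show I + exp (I * (5 * π / 6)) - x = I + exp (I * (5 * π / 6)) + ((-x : ℝ) : ℂ) by
      push_cast; ring]
    refine ReG_lt_of_three_le_normSq hα ht (three_le_normSq_I_add_add hsq₂ him₂ ?_)
      (im_I_add_add him₂ _).le
    rw [hre₂]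
    nlinarith [Real.sqrt_nonneg 3]
  · refine ReG_lt_of_three_le_normSq hα ht ?_ him
    rw [normSq_eq_norm_sq, hnorm]
    nlinarith [Real.sqrt_nonneg 3]

theorem stmt15_general (α : ℝ) (hα1 : 1 / 4 < α) (Rp Rm : ℝ)
    (hRp : Real.sqrt 3 < Rp) (hRm : Real.sqrt 3 < Rm) :
    ∃ c > (0 : ℝ), ∃ t₀ > (0 : ℝ), ∀ t : ℝ, t₀ ≤ t →
      (∀ ξ ∈ GammaPlus Rp, t ^ (-α) ≤ ‖ξ - Complex.I‖ →
        ReG t ξ < -c * t ^ (1 - 3 * α)) ∧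
      (∀ ζ ∈ GammaMinus Rm, t ^ (-α) ≤ ‖ζ + Complex.I‖ →
        c * t ^ (1 - 3 * α) < ReH t ζ) := by
  have hα : 0 ≤ α := by linarith
  refine ⟨1 / 50, by norm_num, 1, one_pos, fun t ht => ⟨fun ξ hξ hd => ?_, ?_⟩⟩
  · exact ReG_lt_of_mem_GammaPlus hRp.le hα ht hξ hd
  · rintro _ ⟨ξ, hξ, rfl⟩ hd
    have hconj : conj ξ + I = conj (ξ - I) := by rw [map_sub, conj_I]; ring
    rw [hconj, norm_conj] at hd
    rw [ReH_conj]
    linarith [ReG_lt_of_mem_GammaPlus hRm.le hα ht hξ hd]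

theorem stmt15 (α : ℝ) (hα1 : 1 / 4 < α) (hα2 : α < 1 / 3) (Rp Rm : ℝ)
    (hRp : Real.sqrt 3 < Rp) (hRm : Real.sqrt 3 < Rm) :
    ∃ c > (0 : ℝ), ∃ t₀ > (0 : ℝ), ∀ t : ℝ, t₀ ≤ t →
      (∀ ξ ∈ GammaPlus Rp, t ^ (-α) ≤ ‖ξ - Complex.I‖ →
        ReG t ξ < -c * t ^ (1 - 3 * α)) ∧
      (∀ ζ ∈ GammaMinus Rm, t ^ (-α) ≤ ‖ζ + Complex.I‖ →
        c * t ^ (1 - 3 * α) < ReH t ζ) :=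
  stmt15_general α hα1 Rp Rm hRp hRm
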